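/- The truncated identity holds: the first N² + 1 coefficients (in q) of ∏_{i=1}^∞ 1/(1 − q^i) agree with those of ∑_{k=0}^{N} q^{k²} / ∏_{j=1}^k (1 − q^j)². -/

import Mathlib

/-!
Removing the Durfee `i × (i + r)` rectangle from a partition into at most `d + r` parts gives
the finite identity `1/(x)_{d+r} = ∑_{i ≤ d} x^{i(i+r)} [d, i]_x / (x)_{i+r}`, which follows by
induction on `d` from the `x`-Pascal rule in any field where `x` is not a root of unity.
For `r = 0` and `x = q`, the `k`-th term is `q^{k²}/(q)_k² · (q)_n/(q)_{n-k}`, and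
`(q)_n/(q)_{n-k} ≡ 1` modulo `q^{n-k+1}`; as `k² ≥ k`, `1/(q)_n ≡ ∑_{k ≤ n} q^{k²}/(q)_k²`
modulo `q^{n+1}`. With `n = N + m`, the terms with `k > N` are multiples of `q^{(N+1)²}`,
invisible in degree `m ≤ N²`, and `1/(q)_{m+1} ≡ 1/(q)_n` modulo `q^{m+1}`.
-/

open Finset PowerSeries

section CommRing

variable {R : Type*} [CommRing R]

def qPochhammer (x : R) (n : ℕ) : R :=
  ∏ j ∈ range n, (1 - x ^ (j + 1))

@[simp]
lemma qPochhammer_zero (x : R) : qPochhammer x 0 = 1 :=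
  prod_range_zero _

lemma qPochhammer_succ (x : R) (n : ℕ) :
    qPochhammer x (n + 1) = qPochhammer x n * (1 - x ^ (n + 1)) :=
  prod_range_succ _ _

lemma map_qPochhammer {S : Type*} [CommRing S] (f : R →+* S) (x : R) (n : ℕ) :
    f (qPochhammer x n) = qPochhammer (f x) n := by
  simp [qPochhammer, map_prod]

lemma pow_min_succ_dvd_qPochhammer_sub (x : R) (a b : ℕ) :
    x ^ (min a b + 1) ∣ qPochhammer x a - qPochhammer x b := by
  wlog hab : a ≤ b generalizing a b
  · rw [min_comm, ← dvd_neg, neg_sub]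
    exact this b a (by omega)
  let π := Ideal.Quotient.mk (Ideal.span {x ^ (a + 1)})
  have hπ : ∀ j ∈ Ico a b, π (1 - x ^ (j + 1)) = 1 := fun j hj ↦ by
    rw [map_sub, map_one, Ideal.Quotient.eq_zero_iff_mem.2, sub_zero]
    exact Ideal.mem_span_singleton.2 (pow_dvd_pow x (by simp at hj; omega))
  have hIco : π (∏ j ∈ Ico a b, (1 - x ^ (j + 1))) = 1 := by
    rw [map_prod, prod_congr rfl hπ, prod_const_one]
  rw [min_eq_left hab, ← Ideal.mem_span_singleton, ← Ideal.Quotient.eq, qPochhammer, qPochhammer,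
    ← prod_range_mul_prod_Ico _ hab, map_mul, hIco, mul_one]

end CommRing

section Field

variable {K : Type*} [Field K] {x : K}

lemma qPochhammer_ne_zero (hx : ¬IsOfFinOrder x) (n : ℕ) : qPochhammer x n ≠ 0 :=
  prod_ne_zero_iff.2 fun j _ ↦ sub_ne_zero.2 fun h ↦
    hx (isOfFinOrder_iff_pow_eq_one.2 ⟨j + 1, j.succ_pos, h.symm⟩)

lemma inv_qPochhammer_succ (hx : ¬IsOfFinOrder x) (n : ℕ) :
    (qPochhammer x (n + 1))⁻¹ = (qPochhammer x n)⁻¹ + x ^ (n + 1) * (qPochhammer x (n + 1))⁻¹ := by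
  have h := qPochhammer_ne_zero hx (n + 1)
  rw [qPochhammer_succ] at h ⊢
  obtain ⟨h₁, h₂⟩ := mul_ne_zero_iff.1 h
  field_simp
  ring

/-- The Gaussian binomial coefficient `[d, i]_x`; it vanishes for `i > d`. -/
def qBinomial (x : K) (d i : ℕ) : K :=
  if i ≤ d then qPochhammer x d / (qPochhammer x i * qPochhammer x (d - i)) else 0

lemma qBinomial_of_lt {d i : ℕ} (h : d < i) : qBinomial x d i = 0 :=
  if_neg h.not_ge

lemma qBinomial_zero_right (hx : ¬IsOfFinOrder x) (d : ℕ) : qBinomial x d 0 = 1 := by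
  simp [qBinomial, qPochhammer_ne_zero hx]

lemma qBinomial_self (hx : ¬IsOfFinOrder x) (d : ℕ) : qBinomial x d d = 1 := by
  simp [qBinomial, qPochhammer_ne_zero hx]

lemma qBinomial_succ_succ (hx : ¬IsOfFinOrder x) (d i : ℕ) :
    qBinomial x (d + 1) (i + 1) = qBinomial x d (i + 1) + x ^ (d - i) * qBinomial x d i := by
  rcases lt_trichotomy i d with hid | rfl | hdi
  · obtain ⟨e, rfl⟩ := Nat.exists_eq_add_of_lt hid
    have h₁ := qPochhammer_ne_zero hx (i + 1)
    have h₂ := qPochhammer_ne_zero hx (e + 1)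
    rw [qPochhammer_succ] at h₁ h₂
    obtain ⟨hPi, hAi⟩ := mul_ne_zero_iff.1 h₁
    obtain ⟨hPe, hAe⟩ := mul_ne_zero_iff.1 h₂
    simp only [qBinomial, if_pos (by omega : i + 1 ≤ i + e + 1 + 1),
      if_pos (by omega : i + 1 ≤ i + e + 1), if_pos (by omega : i ≤ i + e + 1),
      show i + e + 1 + 1 - (i + 1) = e + 1 by omega, show i + e + 1 - (i + 1) = e by omega,
      show i + e + 1 - i = e + 1 by omega, qPochhammer_succ]
    field_simp
    ring
  · simp [qBinomial_self hx, qBinomial_of_lt]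
  · simp [qBinomial_of_lt, hdi, show d + 1 < i + 1 by omega, show d < i + 1 by omega]

lemma sum_qBinomial_div_qPochhammer (hx : ¬IsOfFinOrder x) (d r : ℕ) :
    ∑ i ∈ range (d + 1), x ^ (i * (i + r)) * qBinomial x d i / qPochhammer x (i + r) =
      (qPochhammer x (d + r))⁻¹ := by
  induction d generalizing r with
  | zero => simp [qBinomial_self hx, div_eq_mul_inv]
  | succ d ih =>
    have hsplit : ∀ i ∈ range (d + 1),
        x ^ ((i + 1) * (i + 1 + r)) * qBinomial x (d + 1) (i + 1) / qPochhammer x (i + 1 + r) =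
          x ^ ((i + 1) * (i + 1 + r)) * qBinomial x d (i + 1) / qPochhammer x (i + 1 + r) +
            x ^ (d + r + 1) *
              (x ^ (i * (i + (r + 1))) * qBinomial x d i / qPochhammer x (i + (r + 1))) := by
      intro i hi
      obtain ⟨e, rfl⟩ := Nat.exists_eq_add_of_le (mem_range_succ_iff.1 hi)
      rw [qBinomial_succ_succ hx, Nat.add_sub_cancel_left, show i + (r + 1) = i + 1 + r by omega]
      ring
    have hlow : ∑ i ∈ range (d + 1),
        x ^ ((i + 1) * (i + 1 + r)) * qBinomial x d (i + 1) / qPochhammer x (i + 1 + r) +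
          x ^ (0 * (0 + r)) * qBinomial x d 0 / qPochhammer x (0 + r) =
            (qPochhammer x (d + r))⁻¹ := by
      rw [← ih r,
        ← sum_range_succ' (fun i ↦ x ^ (i * (i + r)) * qBinomial x d i / qPochhammer x (i + r)),
        sum_range_succ, qBinomial_of_lt (lt_add_one d), mul_zero, zero_div, add_zero]
    rw [sum_range_succ', sum_congr rfl hsplit, sum_add_distrib, ← mul_sum, ih (r + 1),
      qBinomial_zero_right hx, ← qBinomial_zero_right hx d, add_right_comm, hlow,
      show d + 1 + r = d + r + 1 by omega, show d + (r + 1) = d + r + 1 by omega,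
      ← inv_qPochhammer_succ hx]

end Field

namespace PowerSeries

variable {k : Type*} [Field k]

lemma coeff_eq_of_X_pow_dvd_sub {R : Type*} [Ring R] {φ ψ : R⟦X⟧} {m t : ℕ} (hmt : m < t)
    (h : X ^ t ∣ φ - ψ) : coeff m φ = coeff m ψ :=
  sub_eq_zero.1 (by simpa using X_pow_dvd_iff.1 h m hmt)

lemma dvd_inv_sub_inv {φ ψ c : k⟦X⟧} (hφ : constantCoeff φ ≠ 0) (hψ : constantCoeff ψ ≠ 0)
    (h : c ∣ φ - ψ) : c ∣ ψ⁻¹ - φ⁻¹ := by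
  have key : ψ⁻¹ - φ⁻¹ = ψ⁻¹ * φ⁻¹ * (φ - ψ) := by
    linear_combination
      (-ψ⁻¹) * PowerSeries.mul_inv_cancel φ hφ + φ⁻¹ * PowerSeries.mul_inv_cancel ψ hψ
  rw [key]
  exact h.mul_left _

lemma map_inv_of_constantCoeff_ne_zero {L : Type*} [DivisionRing L] (f : k⟦X⟧ →+* L) {φ : k⟦X⟧}
    (h : constantCoeff φ ≠ 0) : f φ⁻¹ = (f φ)⁻¹ :=
  eq_inv_of_mul_eq_one_left (by rw [← map_mul, PowerSeries.inv_mul_cancel φ h, map_one])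

@[simp]
lemma constantCoeff_qPochhammer_X {R : Type*} [CommRing R] (n : ℕ) :
    constantCoeff (qPochhammer (X : R⟦X⟧) n) = 1 := by
  simp [qPochhammer, map_prod]

lemma not_isOfFinOrder_algebraMap_X :
    ¬IsOfFinOrder (algebraMap k⟦X⟧ (FractionRing k⟦X⟧) X) := by
  rintro hX
  obtain ⟨n, hn, h⟩ := isOfFinOrder_iff_pow_eq_one.1 hX
  rw [← map_pow, ← map_one (algebraMap k⟦X⟧ _), (IsFractionRing.injective _ _).eq_iff] at h
  simpa [hn.ne'] using congrArg constantCoeff h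

lemma inv_qPochhammer_X_eq_sum (n : ℕ) :
    (qPochhammer (X : k⟦X⟧) n)⁻¹ = ∑ j ∈ range (n + 1), X ^ (j ^ 2) *
      (qPochhammer (X : k⟦X⟧) j)⁻¹ ^ 2 * (qPochhammer X n * (qPochhammer X (n - j))⁻¹) := by
  have hX := not_isOfFinOrder_algebraMap_X (k := k)
  have hι : ∀ j, algebraMap k⟦X⟧ (FractionRing k⟦X⟧) (qPochhammer X j)⁻¹ =
      (qPochhammer (algebraMap k⟦X⟧ (FractionRing k⟦X⟧) X) j)⁻¹ := fun j ↦ by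
    rw [map_inv_of_constantCoeff_ne_zero _ (by simp), map_qPochhammer]
  have hDurfee := sum_qBinomial_div_qPochhammer hX n 0
  simp only [add_zero] at hDurfee
  apply IsFractionRing.injective k⟦X⟧ (FractionRing k⟦X⟧)
  simp only [map_sum, map_mul, map_pow, hι, map_qPochhammer]
  rw [← hDurfee]
  refine sum_congr rfl fun j hj ↦ ?_
  have := qPochhammer_ne_zero hX j
  have := qPochhammer_ne_zero hX (n - j)
  rw [qBinomial, if_pos (mem_range_succ_iff.1 hj)]
  field_simp
  ring

lemma X_pow_succ_dvd_inv_qPochhammer_X_sub_sum (n : ℕ) :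
    X ^ (n + 1) ∣ (qPochhammer (X : k⟦X⟧) n)⁻¹ -
      ∑ j ∈ range (n + 1), X ^ (j ^ 2) * (qPochhammer (X : k⟦X⟧) j)⁻¹ ^ 2 := by
  rw [inv_qPochhammer_X_eq_sum, ← sum_sub_distrib]
  refine dvd_sum fun j hj ↦ ?_
  have hjn := mem_range_succ_iff.1 hj
  have hfactor : X ^ (n - j + 1) ∣ qPochhammer (X : k⟦X⟧) n * (qPochhammer X (n - j))⁻¹ - 1 := by
    have h := pow_min_succ_dvd_qPochhammer_sub (X : k⟦X⟧) n (n - j)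
    rw [min_eq_right (Nat.sub_le n j)] at h
    have hsplit : qPochhammer (X : k⟦X⟧) n * (qPochhammer X (n - j))⁻¹ - 1 =
        (qPochhammer X (n - j))⁻¹ * (qPochhammer X n - qPochhammer X (n - j)) := by
      linear_combination PowerSeries.inv_mul_cancel (qPochhammer (X : k⟦X⟧) (n - j)) (by simp)
    rw [hsplit]
    exact h.mul_left _
  rw [← mul_sub_one]
  calc X ^ (n + 1) ∣ X ^ (j ^ 2) * X ^ (n - j + 1) := by
        rw [← pow_add]
        exact pow_dvd_pow X (by have := Nat.le_self_pow two_ne_zero j; omega)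
    _ ∣ _ := mul_dvd_mul (dvd_mul_right _ _) hfactor

lemma X_pow_min_succ_dvd_inv_qPochhammer_X_sub (a b : ℕ) :
    X ^ (min a b + 1) ∣ (qPochhammer (X : k⟦X⟧) a)⁻¹ - (qPochhammer X b)⁻¹ :=
  dvd_inv_sub_inv (by simp) (by simp) (min_comm a b ▸ pow_min_succ_dvd_qPochhammer_sub X b a)

lemma prod_inv_one_sub_X_pow (n : ℕ) :
    ∏ i ∈ range n, (1 - (X : k⟦X⟧) ^ (i + 1))⁻¹ = (qPochhammer X n)⁻¹ := by
  rw [eq_inv_iff_mul_eq_one (by simp), qPochhammer, ← prod_mul_distrib]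
  exact prod_eq_one fun i _ ↦ PowerSeries.inv_mul_cancel _ (by simp)

end PowerSeries

/-- Truncated Euler–Gauss identity: for every `m ≤ N²`, the `m`-th coefficient of
`∏_{i≥1} 1/(1-q^i)` (the `m`-th coefficient of the infinite product equals that of the
product of the first `m+1` factors, since the remaining factors are `1 + O(q^{m+1})`)
agrees with the `m`-th coefficient of the finite sum `∑_{k=0}^N q^{k²}/∏_{j=1}^k (1-q^j)²`. -/
theorem truncated_euler_gauss (N m : ℕ) (hm : m ≤ N ^ 2) :
    PowerSeries.coeff m
        (∏ i ∈ Finset.range (m + 1), ((1 - (PowerSeries.X : PowerSeries ℚ) ^ (i + 1))⁻¹)) =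
      PowerSeries.coeff m
        (∑ k ∈ Finset.range (N + 1),
          (PowerSeries.X : PowerSeries ℚ) ^ (k ^ 2) *
            ((∏ j ∈ Finset.range k, (1 - (PowerSeries.X : PowerSeries ℚ) ^ (j + 1)))⁻¹) ^ 2) := by
  set n := N + m
  have h₁ : X ^ (m + 1) ∣ (qPochhammer (X : ℚ⟦X⟧) (m + 1))⁻¹ - (qPochhammer X n)⁻¹ :=
    (pow_dvd_pow X (by omega)).trans (X_pow_min_succ_dvd_inv_qPochhammer_X_sub _ _)
  have h₂ : X ^ (m + 1) ∣ (qPochhammer (X : ℚ⟦X⟧) n)⁻¹ -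
      ∑ k ∈ range (n + 1), X ^ (k ^ 2) * (qPochhammer (X : ℚ⟦X⟧) k)⁻¹ ^ 2 :=
    (pow_dvd_pow X (by omega)).trans (X_pow_succ_dvd_inv_qPochhammer_X_sub_sum n)
  have h₃ : X ^ (m + 1) ∣ ∑ k ∈ range (n + 1), X ^ (k ^ 2) * (qPochhammer (X : ℚ⟦X⟧) k)⁻¹ ^ 2 -
      ∑ k ∈ range (N + 1), X ^ (k ^ 2) * (qPochhammer (X : ℚ⟦X⟧) k)⁻¹ ^ 2 := by
    rw [show n + 1 = N + 1 + m by omega, sum_range_add, add_sub_cancel_left]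
    exact dvd_sum fun k _ ↦ (pow_dvd_pow X
      (hm.trans_lt (Nat.pow_lt_pow_left (by omega) two_ne_zero))).mul_right _
  rw [prod_inv_one_sub_X_pow]
  have h := dvd_add (dvd_add h₁ h₂) h₃
  rw [sub_add_sub_cancel, sub_add_sub_cancel] at h
  exact coeff_eq_of_X_pow_dvd_sub (lt_add_one m) h
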